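/- Let μ be a finitely supported ergodic ×(2,3)-invariant Borel probability measure on the unit circle 𝕋, and let maxr(μ) denote the maximum over ω ∈ supp(μ) of the multiplicative order of ω (the least positive d with ω^d = 1). Then |supp(μ)| ≤ maxr(μ) ≤ 6^{|supp(μ)|}. -/

import Mathlib

open MeasureTheory Metric Complex Filter Topology
open scoped ENNReal NNReal

noncomputable section

instance : MeasurableSpace Circle := borel Circle
instance : BorelSpace Circle := ⟨rfl⟩

/-- The normalized Haar (Lebesgue) probability measure on the circle. -/
def haarCircle : Measure Circle :=
  Measure.haarMeasure (⊤ : TopologicalSpace.PositiveCompacts Circle)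

/-- A measure on the circle is `×n`-invariant. -/
def MulInvariant (n : ℕ) (μ : Measure Circle) : Prop :=
  ∀ f : C(Circle, ℂ), ∫ ω, f (ω ^ n) ∂μ = ∫ ω, f ω ∂μ

/-- `×(2,3)`-invariant Borel probability measures. -/
def Inv23 (μ : Measure Circle) : Prop :=
  IsProbabilityMeasure μ ∧ MulInvariant 2 μ ∧ MulInvariant 3 μ

/-- Ergodicity of a `×(2,3)`-invariant probability measure. -/
def Ergodic23 (μ : Measure Circle) : Prop :=
  Inv23 μ ∧ ∀ (κ ν : Measure Circle) (t : ℝ≥0∞), Inv23 κ → Inv23 ν →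
    0 < t → t < 1 → μ = t • κ + (1 - t) • ν → κ = μ ∧ ν = μ

/-- The support of a measure: the minimal closed set of full measure. -/
def msupport (μ : Measure Circle) : Set Circle :=
  ⋂₀ {s : Set Circle | IsClosed s ∧ μ s = 1}

/-- Vague convergence of measures on the circle. -/
def VagueTendsto (μs : ℕ → Measure Circle) (μ : Measure Circle) : Prop :=
  ∀ f : C(Circle, ℂ),
    Tendsto (fun n => ∫ ω, f ω ∂(μs n)) atTop (𝓝 (∫ ω, f ω ∂μ))

/-- The `ℓ`-th Fourier coefficient of a measure on the circle. -/
def fourierCoef (μ : Measure Circle) (ℓ : ℤ) : ℂ :=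
  ∫ ω, (ω : ℂ) ^ (-ℓ) ∂μ

/-- The Herglotz transform of a measure on the circle. -/
def herglotz (μ : Measure Circle) (z : ℂ) : ℂ :=
  ∫ ω, ((ω : ℂ) + z) / ((ω : ℂ) - z) ∂μ

/-- Carathéodory function: holomorphic on the unit disk, positive real part, `ψ 0 = 1`. -/
def IsCara (ψ : ℂ → ℂ) : Prop :=
  DifferentiableOn ℂ ψ (ball (0 : ℂ) 1) ∧
    (∀ z ∈ ball (0 : ℂ) 1, 0 < (ψ z).re) ∧ ψ 0 = 1

/-- `×n`-circularity of a function on the unit disk. -/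
def IsCircular (n : ℕ) (ψ : ℂ → ℂ) : Prop :=
  ∀ z ∈ ball (0 : ℂ) 1,
    ψ (z ^ n) = (n : ℂ)⁻¹ *
      ∑ k ∈ Finset.range n, ψ (Complex.exp (2 * Real.pi * Complex.I * k / n) * z)

/-- Membership in `Cara(𝔻;2,3)`. -/
def Cara23 (ψ : ℂ → ℂ) : Prop := IsCara ψ ∧ IsCircular 2 ψ ∧ IsCircular 3 ψ

/-- Extreme points of `Cara(𝔻;2,3)`. -/
def ExtremeCara23 (ψ : ℂ → ℂ) : Prop :=
  Cara23 ψ ∧ ∀ (α β : ℂ → ℂ) (t : ℝ), Cara23 α → Cara23 β → 0 < t → t < 1 →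
    (∀ z ∈ ball (0 : ℂ) 1, ψ z = t * α z + (1 - t) * β z) →
    Set.EqOn α ψ (ball (0 : ℂ) 1) ∧ Set.EqOn β ψ (ball (0 : ℂ) 1)

/-- A function is rational on the disk. -/
def RationalOnDisk (ψ : ℂ → ℂ) : Prop :=
  ∃ p q : Polynomial ℂ, (∀ z ∈ ball (0 : ℂ) 1, q.eval z ≠ 0) ∧
    ∀ z ∈ ball (0 : ℂ) 1, ψ z = p.eval z / q.eval z

/-- Uniform convergence on compact subsets of the unit disk. -/
def CompactUniformTendsto (ψs : ℕ → ℂ → ℂ) (ψ : ℂ → ℂ) : Prop :=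
  ∀ K : Set ℂ, K ⊆ ball (0 : ℂ) 1 → IsCompact K →
    TendstoUniformlyOn (fun n => ψs n) ψ atTop K

/-- The `ℓ`-th Taylor coefficient at `0` of a function on the disk. -/
def taylorCoef (f : ℂ → ℂ) (ℓ : ℕ) : ℂ :=
  iteratedDeriv ℓ f 0 / (ℓ.factorial : ℂ)

/-- The `×(2,3)`-orbit of a point of the circle. -/
def orbit23 (ω : Circle) : Set Circle :=
  {ϑ : Circle | ∃ j k : ℕ, ϑ = ω ^ (2 ^ j * 3 ^ k)}

/-!
Invariance under `×n` together with finiteness of the support makes `ω ↦ ω ^ n` a permutation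
of the support, so every support point satisfies `ω ^ n ^ c = ω` for some `1 ≤ c ≤ |supp μ|`.
Hence its order divides `n ^ c - 1`: taking `n = 2` it is less than `2 ^ |supp μ|`, and it is
coprime to `2` and `3`, so that `×2` and `×3` preserve orders on the support. The support points
of a given order therefore form an a.e. invariant set, which by ergodicity has full measure. So
all support points have a common order `d`, and there are at most `d` of them, being `d`-th roots
of unity.
-/

open Set Function

theorem orderOf_dvd_sub_one_of_pow_eq_self {G : Type*} [Group G] {x : G} {m : ℕ}
    (h : x ^ m = x) : orderOf x ∣ m - 1 := by
  apply orderOf_dvd_of_pow_eq_one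
  rcases m with _ | m
  · simp
  · rwa [pow_succ, mul_eq_right] at h

theorem Nat.coprime_of_dvd_pow_sub_one {k n c : ℕ} (hn : n ≠ 0) (hc : c ≠ 0)
    (h : k ∣ n ^ c - 1) : k.Coprime n := by
  have hcop : (n ^ c - 1).Coprime (n ^ c) :=
    (Nat.coprime_self_sub_left (Nat.one_le_pow _ _ (Nat.pos_of_ne_zero hn))).2
      (Nat.coprime_one_left _)
  exact (hcop.coprime_dvd_right (dvd_pow_self n hc)).coprime_dvd_left h

theorem Finset.exists_iterate_eq_self_of_injOn {α : Type*} {f : α → α} {s : Finset α}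
    (hmaps : MapsTo f s s) (hinj : InjOn f s) {x : α} (hx : x ∈ s) :
    ∃ c, 0 < c ∧ c ≤ s.card ∧ f^[c] x = x := by
  set g := hmaps.restrict f s s
  have hg : Injective g := hmaps.restrict_inj.2 hinj
  refine ⟨minimalPeriod g ⟨x, hx⟩,
    minimalPeriod_pos_of_mem_periodicPts (hg.mem_periodicPts _), ?_, ?_⟩
  · simpa using minimalPeriod_le_card (f := g) (x := ⟨x, hx⟩)
  · have := congrArg Subtype.val (iterate_minimalPeriod (f := g) (x := ⟨x, hx⟩))
    rwa [hmaps.iterate_restrict] at this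

theorem Finset.card_le_of_forall_pow_eq_one {s : Finset Circle} {d : ℕ} (hd : 0 < d)
    (h : ∀ x ∈ s, x ^ d = 1) : s.card ≤ d := by
  classical
  calc s.card = (s.image fun x : Circle => (x : ℂ)).card :=
        (Finset.card_image_of_injective _ Circle.coe_injective).symm
    _ ≤ (Polynomial.nthRoots d (1 : ℂ)).toFinset.card := by
        refine Finset.card_le_card fun z hz => ?_
        obtain ⟨x, hx, rfl⟩ := Finset.mem_image.1 hz
        rw [Multiset.mem_toFinset, Polynomial.mem_nthRoots hd, ← Circle.coe_pow, h x hx,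
          Circle.coe_one]
    _ ≤ Multiset.card (Polynomial.nthRoots d (1 : ℂ)) := Multiset.toFinset_card_le _
    _ ≤ d := Polynomial.card_nthRoots d 1

open MeasureTheory ProbabilityTheory

theorem mulInvariant_iff_measurePreserving {n : ℕ} {μ : Measure Circle} [IsFiniteMeasure μ] :
    MulInvariant n μ ↔ MeasurePreserving (· ^ n) μ μ := by
  have hmeas : Measurable fun ω : Circle => ω ^ n := (continuous_pow n).measurable
  constructor
  · refine fun h => ⟨hmeas, ext_of_forall_integral_eq_of_IsFiniteMeasure fun f => ?_⟩
    rw [integral_map hmeas.aemeasurable f.continuous.aestronglyMeasurable]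
    have := h ⟨fun ω => (f ω : ℂ), Complex.continuous_ofReal.comp f.continuous⟩
    simp only [ContinuousMap.coe_mk] at this
    exact_mod_cast this
  · intro h f
    rw [← integral_map hmeas.aemeasurable f.continuous.aestronglyMeasurable, h.map_eq]

theorem MeasureTheory.MeasurePreserving.cond_of_preimage_ae_eq {α : Type*} [MeasurableSpace α]
    {μ : Measure α} {f : α → α} (hf : MeasurePreserving f μ μ) {A : Set α}
    (hA : MeasurableSet A) (hfA : f ⁻¹' A =ᵐ[μ] A) : MeasurePreserving f μ[|A] μ[|A] := by
  have := hf.restrict_preimage hA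
  rw [Measure.restrict_congr_set hfA] at this
  exact this.smul_measure _

theorem Inv23.cond {μ : Measure Circle} (hμ : Inv23 μ) {B : Set Circle} (hB : MeasurableSet B)
    (hB0 : μ B ≠ 0) (h2 : (· ^ 2) ⁻¹' B =ᵐ[μ] B) (h3 : (· ^ 3) ⁻¹' B =ᵐ[μ] B) :
    Inv23 μ[|B] := by
  obtain ⟨hprob, hinv2, hinv3⟩ := hμ
  exact ⟨cond_isProbabilityMeasure hB0,
    mulInvariant_iff_measurePreserving.2
      ((mulInvariant_iff_measurePreserving.1 hinv2).cond_of_preimage_ae_eq hB h2),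
    mulInvariant_iff_measurePreserving.2
      ((mulInvariant_iff_measurePreserving.1 hinv3).cond_of_preimage_ae_eq hB h3)⟩

theorem Ergodic23.measure_eq_zero_or_one {μ : Measure Circle} (hμ : Ergodic23 μ)
    {A : Set Circle} (hA : MeasurableSet A) (h2 : (· ^ 2) ⁻¹' A =ᵐ[μ] A)
    (h3 : (· ^ 3) ⁻¹' A =ᵐ[μ] A) : μ A = 0 ∨ μ A = 1 := by
  obtain ⟨hinv, hextreme⟩ := hμ
  have := hinv.1
  by_contra! hA01
  have hAc : μ Aᶜ ≠ 0 := fun h => hA01.2 ((prob_compl_eq_zero_iff hA).1 h)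
  have smul_cond : ∀ B, μ B ≠ 0 → μ B • μ[|B] = μ.restrict B := fun B hB0 => by
    rw [ProbabilityTheory.cond, smul_smul, ENNReal.mul_inv_cancel hB0 (measure_ne_top μ B),
      one_smul]
  have hdecomp : μ = μ A • μ[|A] + (1 - μ A) • μ[|Aᶜ] := by
    rw [← prob_compl_eq_one_sub hA, smul_cond A hA01.1, smul_cond Aᶜ hAc,
      Measure.restrict_add_restrict_compl hA]
  obtain ⟨hcond, -⟩ := hextreme _ _ (μ A) (hinv.cond hA hA01.1 h2 h3)
    (hinv.cond hA.compl hAc (by simpa only [preimage_compl] using h2.compl)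
      (by simpa only [preimage_compl] using h3.compl))
    (pos_iff_ne_zero.2 hA01.1) (lt_of_le_of_ne prob_le_one hA01.2) hdecomp
  apply hAc
  rw [← hcond, cond_apply hA, inter_compl_self, measure_empty, mul_zero]

section FiniteSupport

variable {μ : Measure Circle} [IsProbabilityMeasure μ]

theorem ae_mem_msupport : ∀ᵐ x ∂μ, x ∈ msupport μ := by
  refine measure_null_of_locally_null _ fun x hx => ?_
  obtain ⟨s, hs, hμs, hxs⟩ : ∃ s, IsClosed s ∧ μ s = 1 ∧ x ∉ s := by
    simpa [msupport] using hx
  exact ⟨sᶜ, mem_nhdsWithin_of_mem_nhds (hs.isOpen_compl.mem_nhds hxs),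
    (prob_compl_eq_zero_iff hs.measurableSet).2 hμs⟩

theorem mem_msupport_iff_measure_singleton_ne_zero (hfin : (msupport μ).Finite) {x : Circle} :
    x ∈ msupport μ ↔ μ {x} ≠ 0 := by
  refine ⟨fun hx hx0 => ?_, fun hx0 => by_contra fun hx => hx0 ?_⟩
  · have hclosed : IsClosed (msupport μ \ {x}) := (hfin.subset sdiff_subset).isClosed
    have hfull : μ (msupport μ \ {x}) = 1 := by
      have hconull : msupport μ =ᵐ[μ] univ := ae_eq_univ.2 ae_mem_msupport
      rw [measure_sdiff_null hx0, measure_congr hconull, measure_univ]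
    have hsub : msupport μ ⊆ msupport μ \ {x} := sInter_subset_of_mem ⟨hclosed, hfull⟩
    exact (hsub hx).2 rfl
  · exact measure_mono_null (singleton_subset_iff.2 hx) ae_mem_msupport

variable {n : ℕ}

theorem mapsTo_pow_msupport (hfin : (msupport μ).Finite)
    (hμn : MeasurePreserving (· ^ n) μ μ) :
    MapsTo (· ^ n) (msupport μ) (msupport μ) := fun x hx => by
  rw [mem_msupport_iff_measure_singleton_ne_zero hfin] at hx ⊢
  rw [← hμn.measure_preimage (measurableSet_singleton _).nullMeasurableSet]
  exact fun hxn => hx (measure_mono_null (fun y hy => congrArg (· ^ n) hy) hxn)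

theorem surjOn_pow_msupport (hfin : (msupport μ).Finite)
    (hμn : MeasurePreserving (· ^ n) μ μ) :
    SurjOn (· ^ n) (msupport μ) (msupport μ) := fun θ hθ => by
  by_contra hnot
  have hfiber : (· ^ n) ⁻¹' {θ} ⊆ (msupport μ)ᶜ := fun y hy hyS => hnot ⟨y, hyS, hy⟩
  rw [mem_msupport_iff_measure_singleton_ne_zero hfin,
    ← hμn.measure_preimage (measurableSet_singleton _).nullMeasurableSet] at hθ
  exact hθ (measure_mono_null hfiber ae_mem_msupport)

theorem injOn_pow_msupport (hfin : (msupport μ).Finite)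
    (hμn : MeasurePreserving (· ^ n) μ μ) :
    InjOn (· ^ n) (msupport μ) :=
  ((hfin.surjOn_iff_bijOn_of_mapsTo (mapsTo_pow_msupport hfin hμn)).1
    (surjOn_pow_msupport hfin hμn)).injOn

theorem exists_pow_pow_eq_self_of_mem_msupport (hfin : (msupport μ).Finite)
    (hμn : MeasurePreserving (· ^ n) μ μ) {x : Circle} (hx : x ∈ msupport μ) :
    ∃ c, 0 < c ∧ c ≤ hfin.toFinset.card ∧ x ^ n ^ c = x := by
  have hS : (hfin.toFinset : Set Circle) = msupport μ := hfin.coe_toFinset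
  obtain ⟨c, hc0, hc, hxc⟩ := Finset.exists_iterate_eq_self_of_injOn
    (by rw [hS]; exact mapsTo_pow_msupport hfin hμn)
    (by rw [hS]; exact injOn_pow_msupport hfin hμn) (hfin.mem_toFinset.2 hx)
  exact ⟨c, hc0, hc, by rwa [pow_iterate] at hxc⟩

theorem orderOf_pos_and_lt_pow_card_of_mem_msupport (hfin : (msupport μ).Finite)
    (hμn : MeasurePreserving (· ^ n) μ μ) (hn : 2 ≤ n) {x : Circle} (hx : x ∈ msupport μ) :
    0 < orderOf x ∧ orderOf x < n ^ hfin.toFinset.card := by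
  obtain ⟨c, hc0, hc, hxc⟩ := exists_pow_pow_eq_self_of_mem_msupport hfin hμn hx
  have hdvd := orderOf_dvd_sub_one_of_pow_eq_self hxc
  have hnc : 2 ≤ n ^ c := hn.trans (Nat.le_self_pow hc0.ne' n)
  have hcard : n ^ c ≤ n ^ hfin.toFinset.card := Nat.pow_le_pow_right (by omega) hc
  have hle : orderOf x ≤ n ^ c - 1 := Nat.le_of_dvd (by omega) hdvd
  exact ⟨Nat.pos_of_dvd_of_pos hdvd (by omega), by omega⟩

theorem orderOf_pow_of_mem_msupport (hfin : (msupport μ).Finite)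
    (hμn : MeasurePreserving (· ^ n) μ μ) (hn : n ≠ 0) {x : Circle} (hx : x ∈ msupport μ) :
    orderOf (x ^ n) = orderOf x := by
  obtain ⟨c, hc0, -, hxc⟩ := exists_pow_pow_eq_self_of_mem_msupport hfin hμn hx
  exact (Nat.coprime_of_dvd_pow_sub_one hn hc0.ne'
    (orderOf_dvd_sub_one_of_pow_eq_self hxc)).orderOf_pow

end FiniteSupport

theorem Ergodic23.orderOf_eq_of_mem_msupport {μ : Measure Circle} (hμ : Ergodic23 μ)
    (hfin : (msupport μ).Finite) {x y : Circle} (hx : x ∈ msupport μ) (hy : y ∈ msupport μ) :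
    orderOf y = orderOf x := by
  have := hμ.1.1
  set A := msupport μ ∩ {z | orderOf z = orderOf x}
  have hA : MeasurableSet A := (hfin.subset inter_subset_left).measurableSet
  have hinv : ∀ n ≠ 0, MulInvariant n μ → (· ^ n) ⁻¹' A =ᵐ[μ] A := by
    intro n hn hinvn
    have hμn := mulInvariant_iff_measurePreserving.1 hinvn
    refine eventuallyEq_set.2 ?_
    filter_upwards [ae_mem_msupport] with z hz
    simp only [A, mem_preimage, mem_inter_iff, mem_ofPred_eq, hz, mapsTo_pow_msupport hfin hμn hz,
      orderOf_pow_of_mem_msupport hfin hμn hn hz]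
  have hμA : μ A ≠ 0 := fun h => (mem_msupport_iff_measure_singleton_ne_zero hfin).1 hx
    (measure_mono_null (singleton_subset_iff.2 (show x ∈ A from ⟨hx, rfl⟩)) h)
  have hAc : μ Aᶜ = 0 := (prob_compl_eq_zero_iff hA).2
    ((hμ.measure_eq_zero_or_one hA (hinv 2 two_ne_zero hμ.1.2.1)
      (hinv 3 three_ne_zero hμ.1.2.2)).resolve_left hμA)
  by_contra hxy
  exact (mem_msupport_iff_measure_singleton_ne_zero hfin).1 hy
    (measure_mono_null (singleton_subset_iff.2 (show y ∈ Aᶜ from fun hyA => hxy hyA.2)) hAc)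

theorem card_support_le_maxr_le (μ : Measure Circle) (hμ : Ergodic23 μ)
    (hfin : (msupport μ).Finite) :
    hfin.toFinset.card ≤ hfin.toFinset.sup (fun ω => orderOf ω) ∧
    hfin.toFinset.sup (fun ω => orderOf ω) ≤ 6 ^ hfin.toFinset.card := by
  have := hμ.1.1
  have hμ2 := mulInvariant_iff_measurePreserving.1 hμ.1.2.1
  refine ⟨?_, Finset.sup_le fun x hx => ?_⟩
  · rcases hfin.toFinset.eq_empty_or_nonempty with hempty | ⟨x, hx⟩
    · simp [hempty]
    have hxS := hfin.mem_toFinset.1 hx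
    calc hfin.toFinset.card
        ≤ orderOf x := Finset.card_le_of_forall_pow_eq_one
          (orderOf_pos_and_lt_pow_card_of_mem_msupport hfin hμ2 le_rfl hxS).1 fun y hy => by
            rw [← hμ.orderOf_eq_of_mem_msupport hfin hxS (hfin.mem_toFinset.1 hy)]
            exact pow_orderOf_eq_one y
      _ ≤ hfin.toFinset.sup (fun ω => orderOf ω) := Finset.le_sup (f := fun ω => orderOf ω) hx
  · calc orderOf x ≤ 2 ^ hfin.toFinset.card :=
          (orderOf_pos_and_lt_pow_card_of_mem_msupport hfin hμ2 le_rfl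
            (hfin.mem_toFinset.1 hx)).2.le
      _ ≤ 6 ^ hfin.toFinset.card := Nat.pow_le_pow_left (by norm_num) _

end
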